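/- arXiv:1503.03616 — 3 statements merged into one kernel-verified Lean document; each statement's English description precedes it below -/
import Mathlib

section
/- Let 𝐭 ∈ T_𝐧. Then B_𝐭 ∈ 𝔅_𝐭, and B_𝐭 is the unique element of 𝔅_𝐭 minimizing |Par(−)|: for every B ∈ 𝔅_𝐭 with B ≠ B_𝐭, one has |Par(B)| > |Par(B_𝐭)|. -/
open scoped BigOperators

/-- A partition: infinite weakly decreasing sequence of non-negative integers that is
eventually zero.  `parts i` denotes `λ_{i+1}` (zero-indexed). -/
structure SeqPartition where
  parts : ℕ → ℕ
  antitone' : ∀ i j : ℕ, i ≤ j → parts j ≤ parts i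
  eventually_zero' : ∃ N : ℕ, ∀ k : ℕ, N ≤ k → parts k = 0

/-- `β_s(λ) = {λ_i + s - i : i ∈ ℕ}` (with `i ≥ 1`; `λ_{i+1} = parts i`). -/
def betaSet (lam : SeqPartition) (s : ℤ) : Set ℤ :=
  {x : ℤ | ∃ i : ℕ, x = (lam.parts i : ℤ) + s - (i + 1)}

/-- A set of β-numbers. -/
def IsBetaSet (B : Set ℤ) : Prop :=
  (B ∩ {x : ℤ | 0 ≤ x}).Finite ∧ ({x : ℤ | x < 0} \ B).Finite

/-- `𝔰(B) = |ℕ₀ ∩ B| − |ℤ_{<0} \ B|`. -/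
noncomputable def sInv (B : Set ℤ) : ℤ :=
  ((B ∩ {x : ℤ | 0 ≤ x}).ncard : ℤ) - (({x : ℤ | x < 0} \ B).ncard : ℤ)

/-- The Young diagram `[λ] = {(i,j) ∈ ℕ² : j ≤ λ_i}` with `i, j ≥ 1`. -/
def diagram (lam : SeqPartition) : Set (ℕ × ℕ) :=
  {p : ℕ × ℕ | 1 ≤ p.1 ∧ 1 ≤ p.2 ∧ p.2 ≤ lam.parts (p.1 - 1)}

/-- `|λ|`, the number of nodes of `λ`. -/
noncomputable def wt (lam : SeqPartition) : ℕ := (diagram lam).ncard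

/-- The `n`-residue of a node `(i,j)`, i.e. the class of `j - i` modulo `n`. -/
def res (n : ℕ) (p : ℕ × ℕ) : ZMod n := (((p.2 : ℤ) - (p.1 : ℤ)) : ZMod n)

def Removable (lam : SeqPartition) (p : ℕ × ℕ) : Prop :=
  p ∈ diagram lam ∧ ∃ mu : SeqPartition, diagram mu = diagram lam \ {p}

def Addable (lam : SeqPartition) (p : ℕ × ℕ) : Prop :=
  p ∉ diagram lam ∧ ∃ mu : SeqPartition, diagram mu = diagram lam ∪ {p}

/-- The rim hook `𝔥_{a,b}(λ) = {(i,j) ∈ [λ] : i ≥ a, j ≥ max(b, λ_{i+1})}`. -/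
def rimHook (lam : SeqPartition) (a b : ℕ) : Set (ℕ × ℕ) :=
  {p : ℕ × ℕ | p ∈ diagram lam ∧ a ≤ p.1 ∧ b ≤ p.2 ∧ lam.parts p.1 ≤ p.2}

/-- `μ` is obtained from `λ` by unwrapping a rim hook of size `c`. -/
def UnwrapHook (lam mu : SeqPartition) (c : ℕ) : Prop :=
  ∃ a b : ℕ, (a, b) ∈ diagram lam ∧ diagram mu = diagram lam \ rimHook lam a b ∧
    (rimHook lam a b).ncard = c

/-- Strict lexicographic order on partitions: `λ > μ`. -/
def PartGT (lam mu : SeqPartition) : Prop :=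
  ∃ r : ℕ, (∀ k : ℕ, k < r → lam.parts k = mu.parts k) ∧ mu.parts r < lam.parts r

def PartGE (lam mu : SeqPartition) : Prop := lam = mu ∨ PartGT lam mu

/-- Lexicographic comparison of integer sequences: `a > b`. -/
def SeqGT (a b : ℕ → ℤ) : Prop :=
  ∃ r : ℕ, (∀ k : ℕ, k < r → a k = b k) ∧ b r < a r

/-- `B > B'` for sets of β-numbers, comparing decreasing enumerations lexicographically. -/
def BetaGT (B B' : Set ℤ) : Prop :=
  ∃ e e' : ℕ → ℤ, StrictAnti e ∧ StrictAnti e' ∧ Set.range e = B ∧ Set.range e' = B' ∧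
    SeqGT e e'

def BetaGE (B B' : Set ℤ) : Prop := B = B' ∨ BetaGT B B'

/-- The relation `B →_n B'`. -/
def StepN (n : ℕ) (B B' : Set ℤ) : Prop :=
  ∃ a b : ℤ, ∃ i : ℕ, a ∈ B ∧ b ∈ B ∧ 1 ≤ i ∧ b + (i : ℤ) * (n : ℤ) < a ∧
    a - (i : ℤ) * (n : ℤ) ∉ B ∧ b + (i : ℤ) * (n : ℤ) ∉ B ∧
    B' = (B \ {a, b}) ∪ {a - (i : ℤ) * (n : ℤ), b + (i : ℤ) * (n : ℤ)}

/-- The Jantzen order `λ ≥_{J_n} μ` on partitions. -/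
def JantzenGE (n : ℕ) (lam mu : SeqPartition) : Prop :=
  ∃ s : ℤ, Relation.ReflTransGen (StepN n) (betaSet lam s) (betaSet mu s)

def JantzenGT (n : ℕ) (lam mu : SeqPartition) : Prop := JantzenGE n lam mu ∧ lam ≠ mu

/-- `n = n_1 + ⋯ + n_r`. -/
def nTot {r : ℕ} (nn : Fin r → ℕ) : ℕ := ∑ k, nn k

/-- `σ_{j-1} = n_1 + ⋯ + n_{j-1}` (the sum of the entries before index `j`). -/
def sigBefore {r : ℕ} (nn : Fin r → ℕ) (j : Fin r) : ℕ :=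
  ∑ k ∈ Finset.univ.filter (fun k : Fin r => (k : ℕ) < (j : ℕ)), nn k

/-- `X^𝐧_{i,j}(B) = {x − in − σ_{j−1} : x ∈ B ∩ ℤ^𝐧_{i,j}}`. -/
def Xset {r : ℕ} (nn : Fin r → ℕ) (B : Set ℤ) (i : ℤ) (j : Fin r) : Set ℤ :=
  {y : ℤ | ∃ x ∈ B, (sigBefore nn j : ℤ) ≤ x - i * (nTot nn : ℤ) ∧
    x - i * (nTot nn : ℤ) < (sigBefore nn j : ℤ) + (nn j : ℤ) ∧
    y = x - i * (nTot nn : ℤ) - (sigBefore nn j : ℤ)}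

/-- `𝚝^𝐧_B (i,j) = |X^𝐧_{i,j}(B)|`. -/
noncomputable def tfun {r : ℕ} (nn : Fin r → ℕ) (B : Set ℤ) : ℤ × Fin r → ℕ :=
  fun p => (Xset nn B p.1 p.2).ncard

/-- Membership in `T_𝐧`. -/
def memT {r : ℕ} (nn : Fin r → ℕ) (t : ℤ × Fin r → ℕ) : Prop :=
  (∀ p : ℤ × Fin r, t p ≤ nn p.2) ∧
  {p : ℤ × Fin r | 0 ≤ p.1 ∧ t p ≠ 0}.Finite ∧
  {p : ℤ × Fin r | p.1 < 0 ∧ t p ≠ nn p.2}.Finite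

/-- `𝔰(𝐭)`. -/
noncomputable def sT {r : ℕ} (nn : Fin r → ℕ) (t : ℤ × Fin r → ℕ) : ℤ :=
  (∑ᶠ p ∈ {p : ℤ × Fin r | 0 ≤ p.1}, (t p : ℤ)) -
  (∑ᶠ p ∈ {p : ℤ × Fin r | p.1 < 0}, ((nn p.2 : ℤ) - (t p : ℤ)))

/-- `B_𝐭`, determined by `X^𝐧_{i,j}(B_𝐭) = {0, …, 𝐭(i,j) − 1}`. -/
def Bt {r : ℕ} (nn : Fin r → ℕ) (t : ℤ × Fin r → ℕ) : Set ℤ :=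
  {x : ℤ | ∃ i : ℤ, ∃ j : Fin r,
    i * (nTot nn : ℤ) + (sigBefore nn j : ℤ) ≤ x ∧
    x < i * (nTot nn : ℤ) + (sigBefore nn j : ℤ) + (t (i, j) : ℤ)}

/-- One-runner version: `X^{(m)}_i(B)`. -/
def X1 (m : ℕ) (B : Set ℤ) (i : ℤ) : Set ℤ :=
  {y : ℤ | ∃ x ∈ B, i * (m : ℤ) ≤ x ∧ x < (i + 1) * (m : ℤ) ∧ y = x - i * (m : ℤ)}

noncomputable def tfun1 (m : ℕ) (B : Set ℤ) : ℤ → ℕ := fun i => (X1 m B i).ncard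

def memT1 (m : ℕ) (t : ℤ → ℕ) : Prop :=
  (∀ i : ℤ, t i ≤ m) ∧ {i : ℤ | 0 ≤ i ∧ t i ≠ 0}.Finite ∧ {i : ℤ | i < 0 ∧ t i ≠ m}.Finite

noncomputable def sT1 (m : ℕ) (t : ℤ → ℕ) : ℤ :=
  (∑ᶠ i ∈ {i : ℤ | 0 ≤ i}, (t i : ℤ)) - (∑ᶠ i ∈ {i : ℤ | i < 0}, ((m : ℤ) - (t i : ℤ)))

/-- The strict partial order on `T_𝐧`. -/
def Tgt {r : ℕ} (nn : Fin r → ℕ) (t t' : ℤ × Fin r → ℕ) : Prop :=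
  sT nn t = sT nn t' ∧
  ∃ i0 : ℤ, ∃ j0 : Fin r, t' (i0, j0) < t (i0, j0) ∧
    ∀ (i : ℤ) (j : Fin r), (i0 < i ∨ (i = i0 ∧ (j0 : ℕ) < (j : ℕ))) → t (i, j) = t' (i, j)

def Tge {r : ℕ} (nn : Fin r → ℕ) (t t' : ℤ × Fin r → ℕ) : Prop := t = t' ∨ Tgt nn t t'

/-- `m_c` from Statement 5. -/
noncomputable def mcount (lam : SeqPartition) (s : ℤ) (n : ℕ) (c : ℕ) : ℤ :=
  ({i : ℤ | 0 ≤ i ∧ (c : ℤ) + i * (n : ℤ) ∈ betaSet lam s}.ncard : ℤ) -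
  ({i : ℤ | i < 0 ∧ (c : ℤ) + i * (n : ℤ) ∉ betaSet lam s}.ncard : ℤ)

/-- `C = ⋃_{c<n} {c + in : i < m_c}` from Statement 5. -/
def coreSet (lam : SeqPartition) (s : ℤ) (n : ℕ) : Set ℤ :=
  {y : ℤ | ∃ c : ℕ, c < n ∧ ∃ i : ℤ, i < mcount lam s n c ∧ y = (c : ℤ) + i * (n : ℤ)}

/-- The projection `π_𝐭` of the free module `𝔉` onto the span of `{s(λ) : λ ∈ 𝒫_𝐭}`. -/
noncomputable def proj {R : Type*} [Semiring R] {T : Type*} (ind : SeqPartition → T) (t : T)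
    (v : SeqPartition →₀ R) : SeqPartition →₀ R := by
  classical
  exact Finsupp.onFinset v.support (fun mu => if ind mu = t then v mu else 0) <| by
    intro mu h
    rw [Finsupp.mem_support_iff]
    intro hv
    apply h
    simp [hv]

/-! Every integer lies in exactly one window `ℤ^𝐧_{i,j}`, and an element of `𝔅_𝐭` has exactly
`𝐭(i,j)` elements in it, which `B_𝐭` puts at the bottom of the window. So on an interval
`[-Kn, Kn)`, a disjoint union of windows, every `B ∈ 𝔅_𝐭` has as many elements as `B_𝐭` and,
unless `B = B_𝐭`, a strictly larger sum. On the other hand, if `B = β_s(λ)`, `a` lies below the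
non-trivial β-numbers and `b` above them, then the elements of `B` in `[a, b)` are `λ_i + s - i`
for `i ≤ s - a`: there are `s - a` of them, with sum `|λ| + ∑_{a ≤ x < s} x`. Comparing the
counts gives `𝔰(B) = 𝔰(B_𝐭)`, and then comparing the sums gives `|Par(B_𝐭)| < |Par(B)|`. -/

open Finset Filter

lemma sum_lt_sum_of_card_eq {M : Type*} [AddCommGroup M] [LinearOrder M] [IsOrderedAddMonoid M]
    {S T : Finset M} (hcard : T.card = S.card) (hne : S ≠ T) {c : M} (hT : ∀ x ∈ T, x < c)
    (hS : ∀ x ∈ S \ T, c ≤ x) : ∑ x ∈ T, x < ∑ x ∈ S, x := by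
  have hTS : (T \ S).Nonempty := by
    rw [nonempty_iff_ne_empty, Ne, sdiff_eq_empty_iff_subset]
    exact fun h => hne (eq_of_subset_of_card_le h hcard.ge).symm
  have hlt : ∑ x ∈ T \ S, x < ∑ x ∈ S \ T, x :=
    calc ∑ x ∈ T \ S, x < ∑ _x ∈ T \ S, c :=
          sum_lt_sum_of_nonempty hTS fun x hx => hT x (mem_sdiff.1 hx).1
      _ = (S \ T).card • c := by rw [sum_const, card_sdiff_comm hcard]
      _ ≤ ∑ x ∈ S \ T, x := card_nsmul_le_sum _ _ _ hS
  rw [← sub_pos, ← sum_sdiff_sub_sum_sdiff]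
  exact sub_pos.2 hlt

section BetaNumbers

def betaSeq (P : SeqPartition) (s : ℤ) (i : ℕ) : ℤ := P.parts i + s - (i + 1)

lemma betaSeq_strictAnti (P : SeqPartition) (s : ℤ) : StrictAnti (betaSeq P s) :=
  strictAnti_nat_of_succ_lt fun i => by
    have := P.antitone' i (i + 1) i.le_succ
    simp only [betaSeq]
    push_cast
    omega

variable {P : SeqPartition} {N : ℕ}

lemma wt_eq_sum_range (hN : ∀ k, N ≤ k → P.parts k = 0) :
    wt P = ∑ i ∈ range N, P.parts i := by
  have hdiag : diagram P = (fun q : (_ : ℕ) × ℕ => (q.1 + 1, q.2 + 1)) ''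
      ↑((range N).sigma fun i => range (P.parts i)) := by
    ext ⟨i, j⟩
    simp only [diagram, Set.mem_ofPred_eq, Set.mem_image, coe_sigma, Set.mem_sigma_iff,
      coe_range, Set.mem_Iio, Prod.mk.injEq, Sigma.exists]
    constructor
    · rintro ⟨hi, hj, hle⟩
      refine ⟨i - 1, j - 1, ⟨?_, by omega⟩, by omega, by omega⟩
      by_contra h
      rw [hN _ (by omega)] at hle
      omega
    · rintro ⟨i, j, ⟨-, hj⟩, rfl, rfl⟩
      simpa using hj
  rw [wt, hdiag, Set.ncard_image_of_injective, Set.ncard_coe_finset, card_sigma]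
  · simp
  · rintro ⟨a, b⟩ ⟨c, d⟩ h
    simp only [Prod.mk.injEq, add_left_inj] at h
    obtain ⟨rfl, rfl⟩ := h
    rfl

variable {s a b : ℤ} [DecidablePred (· ∈ betaSet P s)]

lemma filter_Ico_mem_betaSet (hN : ∀ k, N ≤ k → P.parts k = 0) (ha : a + N ≤ s)
    (hb : P.parts 0 + s ≤ b) :
    (Ico a b).filter (· ∈ betaSet P s) = (range (s - a).toNat).image (betaSeq P s) := by
  ext x
  simp only [mem_filter, mem_Ico, mem_image, mem_range]
  simp only [betaSet, Set.mem_ofPred_eq, betaSeq]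
  constructor
  · rintro ⟨⟨hax, -⟩, i, rfl⟩
    refine ⟨i, ?_, rfl⟩
    by_contra h
    rw [hN i (by omega)] at hax
    omega
  · rintro ⟨i, hi, rfl⟩
    have := P.antitone' 0 i (Nat.zero_le i)
    exact ⟨⟨by omega, by omega⟩, i, rfl⟩

lemma card_filter_Ico_mem_betaSet (hN : ∀ k, N ≤ k → P.parts k = 0) (ha : a + N ≤ s)
    (hb : P.parts 0 + s ≤ b) :
    ((Ico a b).filter (· ∈ betaSet P s)).card = (s - a).toNat := by
  rw [filter_Ico_mem_betaSet hN ha hb,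
    card_image_of_injective _ (betaSeq_strictAnti P s).injective, card_range]

lemma sum_filter_Ico_mem_betaSet (hN : ∀ k, N ≤ k → P.parts k = 0) (ha : a + N ≤ s)
    (hb : P.parts 0 + s ≤ b) :
    ∑ x ∈ (Ico a b).filter (· ∈ betaSet P s), x =
      wt P + ∑ i ∈ range (s - a).toNat, (s - (i + 1)) := by
  rw [filter_Ico_mem_betaSet hN ha hb,
    sum_image fun i _ j _ h => (betaSeq_strictAnti P s).injective h,
    wt_eq_sum_range (N := (s - a).toNat) fun k hk => hN k (by omega)]
  simp only [betaSeq, Nat.cast_sum, ← sum_add_distrib]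
  exact sum_congr rfl fun i _ => by ring

end BetaNumbers

lemma eventually_filter_Ico_mem_betaSet (P : SeqPartition) (s : ℤ)
    [DecidablePred (· ∈ betaSet P s)] : ∀ᶠ m : ℤ in atTop,
      (((Ico (-m) m).filter (· ∈ betaSet P s)).card : ℤ) = s + m ∧
      ∑ x ∈ (Ico (-m) m).filter (· ∈ betaSet P s), x =
        wt P + ∑ i ∈ range (s + m).toNat, (s - (i + 1)) := by
  obtain ⟨N, hN⟩ := P.eventually_zero'
  filter_upwards [eventually_ge_atTop (N - s), eventually_ge_atTop (P.parts 0 + s)] with m hm hb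
  have ha : -m + N ≤ s := by omega
  rw [card_filter_Ico_mem_betaSet hN ha hb, sum_filter_Ico_mem_betaSet hN ha hb, sub_neg_eq_add]
  exact ⟨Int.toNat_of_nonneg (by omega), rfl⟩

section Windows

variable {r : ℕ} (nn : Fin r → ℕ)

def windowStart (p : ℤ × Fin r) : ℤ := p.1 * nTot nn + sigBefore nn p.2

/-- The window `ℤ^𝐧_{i,j}`. -/
noncomputable def window (p : ℤ × Fin r) : Finset ℤ :=
  Ico (windowStart nn p) (windowStart nn p + nn p.2)

lemma sigBefore_eq_sum_castLE (j : Fin r) :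
    sigBefore nn j = ∑ i : Fin j, nn (Fin.castLE j.2.le i) := by
  have : univ.filter (fun k : Fin r => (k : ℕ) < j) = univ.map (Fin.castLEEmb j.2.le) := by
    ext k
    simp only [mem_filter, mem_univ, true_and, Finset.mem_map, Fin.castLEEmb_apply]
    exact ⟨fun h => ⟨⟨k, h⟩, rfl⟩, by rintro ⟨a, -, rfl⟩; exact a.2⟩
  rw [sigBefore, this, sum_map]
  rfl

lemma tfun_eq_card_filter_window (B : Set ℤ) [DecidablePred (· ∈ B)] (p : ℤ × Fin r) :
    tfun nn B p = ((window nn p).filter (· ∈ B)).card := by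
  have : Xset nn B p.1 p.2 = (· - windowStart nn p) '' ↑((window nn p).filter (· ∈ B)) := by
    ext y
    simp only [Xset, window, windowStart, Set.mem_ofPred_eq, Set.mem_image, coe_filter, mem_Ico]
    constructor
    · rintro ⟨x, hxB, h1, h2, rfl⟩
      exact ⟨x, ⟨⟨by linarith, by linarith⟩, hxB⟩, by ring⟩
    · rintro ⟨x, ⟨⟨h1, h2⟩, hxB⟩, rfl⟩
      exact ⟨x, hxB, by linarith, by linarith, by ring⟩
  rw [tfun, this, Set.ncard_image_of_injective _ sub_left_injective, Set.ncard_coe_finset]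

variable [NeZero (nTot nn)]

/-- `(i, j, c) ↦ i n + σ_{j-1} + c`; that it is a bijection says that the windows partition `ℤ`. -/
noncomputable def windowEquiv : ℤ × (Σ j, Fin (nn j)) ≃ ℤ :=
  (Equiv.prodCongr (Equiv.refl ℤ) finSigmaFinEquiv).trans (Int.divModEquiv (nTot nn)).symm

lemma windowEquiv_apply (i : ℤ) (j : Fin r) (c : Fin (nn j)) :
    windowEquiv nn (i, ⟨j, c⟩) = windowStart nn (i, j) + c := by
  change i * (nTot nn : ℤ) + ((finSigmaFinEquiv ⟨j, c⟩ : Fin (∑ k, nn k)) : ℕ) = _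
  rw [finSigmaFinEquiv_apply, windowStart, sigBefore_eq_sum_castLE]
  push_cast
  ring

lemma mem_window_iff (x i : ℤ) (j : Fin r) :
    x ∈ window nn (i, j) ↔ ∃ c : Fin (nn j), windowEquiv nn (i, ⟨j, c⟩) = x := by
  simp only [window, mem_Ico, windowEquiv_apply]
  constructor
  · rintro ⟨h1, h2⟩
    exact ⟨⟨(x - windowStart nn (i, j)).toNat, by omega⟩, by rw [Int.toNat_of_nonneg] <;> omega⟩
  · rintro ⟨c, rfl⟩
    have := c.2
    omega

lemma existsUnique_mem_window (x : ℤ) : ∃! p : ℤ × Fin r, x ∈ window nn p := by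
  obtain ⟨⟨i, j, c⟩, rfl⟩ := (windowEquiv nn).surjective x
  refine ⟨(i, j), (mem_window_iff nn _ i j).2 ⟨c, rfl⟩, ?_⟩
  rintro ⟨i', j'⟩ h
  obtain ⟨c', hc'⟩ := (mem_window_iff nn _ i' j').1 h
  have := (windowEquiv nn).injective hc'
  simp only [Prod.mk.injEq, Sigma.mk.injEq] at this
  exact Prod.ext this.1 this.2.1

lemma ediv_eq_of_mem_window {x : ℤ} {p : ℤ × Fin r} (h : x ∈ window nn p) :
    x / nTot nn = p.1 := by
  obtain ⟨c, rfl⟩ := (mem_window_iff nn x p.1 p.2).1 h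
  exact congrArg Prod.fst ((Int.divModEquiv (nTot nn)).apply_symm_apply
    (p.1, finSigmaFinEquiv ⟨p.2, c⟩))

lemma Ico_mul_eq_biUnion_window (a b : ℤ) :
    Ico (a * nTot nn) (b * nTot nn) = (Ico a b ×ˢ univ).biUnion (window nn) := by
  have hn : (0 : ℤ) < nTot nn := by have := NeZero.ne (nTot nn); omega
  have hx : ∀ x, x ∈ Ico (a * nTot nn) (b * nTot nn) ↔ x / nTot nn ∈ Ico a b := fun x => by
    simp only [mem_Ico, Int.le_ediv_iff_mul_le hn, Int.ediv_lt_iff_lt_mul hn]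
  ext x
  simp only [mem_biUnion, mem_product, mem_univ, and_true, hx]
  constructor
  · intro h
    obtain ⟨p, hp, -⟩ := existsUnique_mem_window nn x
    exact ⟨p, ediv_eq_of_mem_window nn hp ▸ h, hp⟩
  · rintro ⟨p, hp, hxp⟩
    rwa [ediv_eq_of_mem_window nn hxp]

lemma pairwiseDisjoint_window : (Set.univ : Set (ℤ × Fin r)).PairwiseDisjoint (window nn) :=
  fun _ _ _ _ hpq => disjoint_left.2 fun x hp hq =>
    hpq ((existsUnique_mem_window nn x).unique hp hq)

lemma sum_filter_Ico_mul_eq {M : Type*} [AddCommMonoid M] (S : Set ℤ) [DecidablePred (· ∈ S)]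
    (f : ℤ → M) (a b : ℤ) :
    ∑ x ∈ (Ico (a * nTot nn) (b * nTot nn)).filter (· ∈ S), f x =
      ∑ p ∈ Ico a b ×ˢ univ, ∑ x ∈ (window nn p).filter (· ∈ S), f x := by
  rw [Ico_mul_eq_biUnion_window, filter_biUnion, sum_biUnion]
  exact (pairwiseDisjoint_window nn).subset (Set.subset_univ _) |>.mono fun p => filter_subset _ _

lemma card_filter_Ico_mul_eq_of_tfun_eq {B B' : Set ℤ} [DecidablePred (· ∈ B)]
    [DecidablePred (· ∈ B')] (h : tfun nn B = tfun nn B') (a b : ℤ) :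
    ((Ico (a * nTot nn) (b * nTot nn)).filter (· ∈ B)).card =
      ((Ico (a * nTot nn) (b * nTot nn)).filter (· ∈ B')).card := by
  rw [card_eq_sum_ones, card_eq_sum_ones, sum_filter_Ico_mul_eq nn, sum_filter_Ico_mul_eq nn]
  refine sum_congr rfl fun p _ => ?_
  rw [← card_eq_sum_ones, ← card_eq_sum_ones, ← tfun_eq_card_filter_window,
    ← tfun_eq_card_filter_window, h]

end Windows

section Bt

variable {r : ℕ} (nn : Fin r → ℕ) [NeZero (nTot nn)] {t : ℤ × Fin r → ℕ}

lemma filter_window_Bt (ht : ∀ p, t p ≤ nn p.2) (p : ℤ × Fin r) [DecidablePred (· ∈ Bt nn t)] :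
    (window nn p).filter (· ∈ Bt nn t) = Ico (windowStart nn p) (windowStart nn p + t p) := by
  have hsub : ∀ q, Ico (windowStart nn q) (windowStart nn q + t q) ⊆ window nn q := fun q =>
    Ico_subset_Ico_right (add_le_add_right (Int.ofNat_le.2 (ht q)) _)
  ext x
  rw [mem_filter]
  constructor
  · rintro ⟨hxp, q, j, hq⟩
    have hxq := hsub (q, j) (mem_Ico.2 hq)
    rw [(existsUnique_mem_window nn x).unique hxp hxq]
    exact mem_Ico.2 hq
  · intro hx
    exact ⟨hsub p hx, p.1, p.2, mem_Ico.1 hx⟩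

lemma tfun_Bt (ht : ∀ p, t p ≤ nn p.2) : tfun nn (Bt nn t) = t := by
  classical
  funext p
  rw [tfun_eq_card_filter_window, filter_window_Bt nn ht, Int.card_Ico]
  omega

lemma isBetaSet_Bt (ht : memT nn t) : IsBetaSet (Bt nn t) := by
  obtain ⟨hle, hpos, hneg⟩ := ht
  have hn : (0 : ℤ) < nTot nn := by have := NeZero.ne (nTot nn); omega
  constructor
  · refine (hpos.biUnion fun p _ => (window nn p).finite_toSet).subset ?_
    rintro x ⟨⟨i, j, hx⟩, hx0⟩
    have hxw : x ∈ window nn (i, j) := by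
      have : t (i, j) ≤ nn j := hle (i, j)
      simp only [window, windowStart, mem_Ico] at hx ⊢
      omega
    refine Set.mem_biUnion (x := (i, j)) ⟨?_, by omega⟩ hxw
    rw [← ediv_eq_of_mem_window nn hxw]
    exact Int.ediv_nonneg hx0 hn.le
  · refine (hneg.biUnion fun p _ => (window nn p).finite_toSet).subset ?_
    rintro x ⟨hx0, hxB⟩
    obtain ⟨p, hxp, -⟩ := existsUnique_mem_window nn x
    refine Set.mem_biUnion ⟨?_, fun htp => hxB ⟨p.1, p.2, ?_⟩⟩ hxp
    · rw [← ediv_eq_of_mem_window nn hxp]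
      exact Int.ediv_neg_of_neg_of_pos hx0 hn
    · simpa [window, windowStart, htp] using hxp

variable {B : Set ℤ} [DecidablePred (· ∈ B)] [DecidablePred (· ∈ Bt nn t)]

lemma sum_filter_window_Bt_lt (ht : ∀ p, t p ≤ nn p.2) (hB : tfun nn B = t) {p : ℤ × Fin r}
    (hne : (window nn p).filter (· ∈ B) ≠ (window nn p).filter (· ∈ Bt nn t)) :
    ∑ x ∈ (window nn p).filter (· ∈ Bt nn t), x < ∑ x ∈ (window nn p).filter (· ∈ B), x := by
  rw [filter_window_Bt nn ht] at hne ⊢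
  refine sum_lt_sum_of_card_eq ?_ hne (fun x hx => (mem_Ico.1 hx).2) fun x hx => ?_
  · rw [Int.card_Ico, ← tfun_eq_card_filter_window, hB]
    omega
  · obtain ⟨hxB, hxBt⟩ := mem_sdiff.1 hx
    have := (mem_filter.1 hxB).1
    simp only [window, mem_Ico] at this hxBt
    omega

lemma sum_filter_window_Bt_le (ht : ∀ p, t p ≤ nn p.2) (hB : tfun nn B = t) (p : ℤ × Fin r) :
    ∑ x ∈ (window nn p).filter (· ∈ Bt nn t), x ≤ ∑ x ∈ (window nn p).filter (· ∈ B), x := by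
  rcases eq_or_ne ((window nn p).filter (· ∈ B)) ((window nn p).filter (· ∈ Bt nn t)) with h | h
  · rw [h]
  · exact (sum_filter_window_Bt_lt nn ht hB h).le

lemma sum_filter_Ico_mul_Bt_lt (ht : ∀ p, t p ≤ nn p.2) (hB : tfun nn B = t) {a b x : ℤ}
    (hx : x ∈ Ico (a * nTot nn) (b * nTot nn)) (hxB : ¬(x ∈ B ↔ x ∈ Bt nn t)) :
    ∑ y ∈ (Ico (a * nTot nn) (b * nTot nn)).filter (· ∈ Bt nn t), y <
      ∑ y ∈ (Ico (a * nTot nn) (b * nTot nn)).filter (· ∈ B), y := by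
  rw [sum_filter_Ico_mul_eq, sum_filter_Ico_mul_eq]
  rw [Ico_mul_eq_biUnion_window, mem_biUnion] at hx
  obtain ⟨p, hp, hxp⟩ := hx
  refine sum_lt_sum (fun q _ => sum_filter_window_Bt_le nn ht hB q)
    ⟨p, hp, sum_filter_window_Bt_lt nn ht hB fun h => hxB ?_⟩
  simpa [hxp] using Finset.ext_iff.1 h x

end Bt

/-- `Par(B)` is encoded by a partition `P` with `β_{𝔰(B)}(P) = B`. -/
theorem statement12_general (r : ℕ) (hr : 0 < r) (nn : Fin r → ℕ) (hpos : ∀ j : Fin r, 0 < nn j)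
    (t : ℤ × Fin r → ℕ) (ht : memT nn t) :
    (IsBetaSet (Bt nn t) ∧ tfun nn (Bt nn t) = t) ∧
    ∀ B : Set ℤ, IsBetaSet B → tfun nn B = t → B ≠ Bt nn t →
      ∀ P Pt : SeqPartition, betaSet P (sInv B) = B →
        betaSet Pt (sInv (Bt nn t)) = Bt nn t → wt Pt < wt P := by
  classical
  have hn : 0 < nTot nn := (hpos ⟨0, hr⟩).trans_le (single_le_sum (by simp) (mem_univ _))
  have : NeZero (nTot nn) := ⟨hn.ne'⟩
  refine ⟨⟨isBetaSet_Bt nn ht, tfun_Bt nn ht.1⟩, fun B _ hB hne P Pt hP hPt => ?_⟩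
  obtain ⟨x, hx⟩ : ∃ x, ¬(x ∈ B ↔ x ∈ Bt nn t) := by
    by_contra! h
    exact hne (Set.ext h)
  have hK : Tendsto (fun K : ℤ => K * nTot nn) atTop atTop :=
    tendsto_id.atTop_mul_const' (by exact_mod_cast hn)
  have hxI : ∀ᶠ m : ℤ in atTop, x ∈ Ico (-m) m := by
    filter_upwards [eventually_ge_atTop (-x), eventually_gt_atTop x] with m h1 h2
    exact mem_Ico.2 ⟨by omega, h2⟩
  obtain ⟨K, ⟨hcardP, hsumP⟩, ⟨hcardPt, hsumPt⟩, hxK⟩ :=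
    (hK.eventually ((eventually_filter_Ico_mem_betaSet P (sInv B)).and
      ((eventually_filter_Ico_mem_betaSet Pt (sInv (Bt nn t))).and hxI))).exists
  rw [hP] at hcardP hsumP
  rw [hPt] at hcardPt hsumPt
  have hcard := card_filter_Ico_mul_eq_of_tfun_eq nn (hB.trans (tfun_Bt nn ht.1).symm) (-K) K
  have hsInv : sInv B = sInv (Bt nn t) := by
    rw [neg_mul] at hcard
    omega
  have hlt := sum_filter_Ico_mul_Bt_lt nn ht.1 hB (a := -K) (b := K) (by rwa [neg_mul]) hx
  rw [neg_mul, hsumP, hsumPt, hsInv] at hlt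
  exact_mod_cast (add_lt_add_iff_right _).1 hlt

/-- `B_𝐭 ∈ 𝔅_𝐭`, and it is the unique element of `𝔅_𝐭` minimizing
`|Par(−)|`.  (`Par(B)` is encoded by a partition `P` with `β_{𝔰(B)}(P) = B`.) -/
theorem statement12 (n r : ℕ) (hr : 0 < r) (nn : Fin r → ℕ) (hpos : ∀ j : Fin r, 0 < nn j)
    (hsum : nTot nn = n) (t : ℤ × Fin r → ℕ) (ht : memT nn t) :
    (IsBetaSet (Bt nn t) ∧ tfun nn (Bt nn t) = t) ∧
    ∀ B : Set ℤ, IsBetaSet B → tfun nn B = t → B ≠ Bt nn t →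
      ∀ P Pt : SeqPartition, betaSet P (sInv B) = B →
        betaSet Pt (sInv (Bt nn t)) = Bt nn t → wt Pt < wt P :=
  statement12_general r hr nn hpos t ht
end

section
/- Let λ, μ ∈ 𝒫 and s ∈ ℤ. Then 𝚝^𝐧_{β_s(λ)} = 𝚝^𝐧_{β_s(μ)} if and only if λ and μ have the same sets of nodes of n-residue σ_j − s for all j = 0, 1, …, r−1 (i.e. for each such j, {𝔫 ∈ [λ] : 𝔫 has n-residue σ_j − s} = {𝔫 ∈ [μ] : 𝔫 has n-residue σ_j − s}). -/
open scoped BigOperators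

/-!
The blocks `ℤ^𝐧_{i,j}` tile `ℤ` in increasing order, so for sets bounded above, equal block
counts amount to equal tail counts `|B ∩ [L, ∞)|` at every block start `L = in + σ_j`
(downward induction from an upper bound). For `B = β_s(λ)` the tail count at `L` is the number
of rows `k` with `L ≤ λ_k + s - k`, i.e. whose node of content `L - s` lies in `[λ]`; the block
starts with a fixed `j` are the `L ≡ σ_j (mod n)`, matching the nodes of residue `σ_j - s`.
-/

open Set

section TailCount

noncomputable def tailCount (B : Set ℤ) (L : ℤ) : ℕ := (B ∩ Ici L).ncard

variable {B B' : Set ℤ}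

lemma BddAbove.finite_inter_Ici (hB : BddAbove B) (L : ℤ) : (B ∩ Ici L).Finite :=
  (hB.mono inter_subset_left).finite_of_bddBelow ⟨L, fun _ hx => hx.2⟩

lemma tailCount_eq_ncard_Ico_add (hB : BddAbove B) {L L' : ℤ} (h : L ≤ L') :
    tailCount B L = (B ∩ Ico L L').ncard + tailCount B L' := by
  have hdisj : Disjoint (B ∩ Ico L L') (B ∩ Ici L') :=
    disjoint_left.2 fun _ hx hx' => not_le.2 hx.2.2 hx'.2
  rw [tailCount, tailCount, ← Ico_union_Ici_eq_Ici h, inter_union_distrib_left,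
    ncard_union_eq hdisj ((hB.finite_inter_Ici L).subset fun _ hx => ⟨hx.1, hx.2.1⟩)
      (hB.finite_inter_Ici L')]

lemma tailCount_eq_zero {L : ℤ} (h : ∀ b ∈ B, b < L) : tailCount B L = 0 := by
  rw [tailCount, ← ncard_empty ℤ]
  exact congrArg ncard (eq_empty_iff_forall_notMem.2 fun b hb => not_le.2 (h b hb.1) hb.2)

lemma tailCount_eq_of_ncard_Ico_eq (hB : BddAbove B) (hB' : BddAbove B') {E : Set ℤ}
    (hstep : ∀ L ∈ E, ∃ L' ∈ E, L < L' ∧ (B ∩ Ico L L').ncard = (B' ∩ Ico L L').ncard) :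
    ∀ L ∈ E, tailCount B L = tailCount B' L := by
  obtain ⟨U, hU⟩ := hB.union hB'
  have hdist : ∀ d : ℕ, ∀ L ∈ E, U < L + d → tailCount B L = tailCount B' L := by
    intro d
    induction d with
    | zero =>
      intro L _ hL
      rw [tailCount_eq_zero fun b hb => (hU (Or.inl hb)).trans_lt (by simpa using hL),
        tailCount_eq_zero fun b hb => (hU (Or.inr hb)).trans_lt (by simpa using hL)]
    | succ d ih =>
      intro L hL hUL
      obtain ⟨L', hL', hlt, hcount⟩ := hstep L hL
      rw [tailCount_eq_ncard_Ico_add hB hlt.le, tailCount_eq_ncard_Ico_add hB' hlt.le, hcount,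
        ih L' hL' (by push_cast at hUL; omega)]
  exact fun L hL => hdist (U + 1 - L).toNat L hL (by omega)

lemma ncard_Ico_eq_of_tailCount_eq (hB : BddAbove B) (hB' : BddAbove B') {L L' : ℤ}
    (h : L ≤ L') (hL : tailCount B L = tailCount B' L) (hL' : tailCount B L' = tailCount B' L') :
    (B ∩ Ico L L').ncard = (B' ∩ Ico L L').ncard := by
  have := tailCount_eq_ncard_Ico_add hB h
  have := tailCount_eq_ncard_Ico_add hB' h
  omega

lemma StrictAnti.le_iff_lt_tailCount {f : ℕ → ℤ} (hf : StrictAnti f) (L : ℤ) (k : ℕ) :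
    L ≤ f k ↔ k < tailCount (range f) L := by
  have himage : range f ∩ Ici L = f '' {j | L ≤ f j} := by
    ext x
    constructor
    · rintro ⟨⟨j, rfl⟩, hj⟩
      exact ⟨j, hj, rfl⟩
    · rintro ⟨j, hj, rfl⟩
      exact ⟨⟨j, rfl⟩, hj⟩
  have hfin : {j | L ≤ f j}.Finite :=
    ((finite_Icc L (f 0)).preimage hf.injective.injOn).subset
      fun j hj => ⟨hj, hf.antitone (Nat.zero_le j)⟩
  rw [tailCount, himage, ncard_image_of_injective _ hf.injective]
  constructor
  · intro hk
    have hsub : Iic k ⊆ {j | L ≤ f j} := fun j hj => hk.trans (hf.antitone hj)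
    have := ncard_le_ncard hsub hfin
    rw [← Finset.coe_Iic, ncard_coe_finset, Nat.card_Iic] at this
    omega
  · intro hk
    by_contra hlt
    have hsub : {j | L ≤ f j} ⊆ Iio k := fun j hj =>
      not_le.1 fun hkj => hlt ((hf.antitone hkj).trans' hj)
    have := ncard_le_ncard hsub (finite_Iio k)
    rw [← Finset.coe_Iio, ncard_coe_finset, Nat.card_Iio] at this
    omega

lemma StrictAnti.tailCount_range_eq_iff {f g : ℕ → ℤ} (hf : StrictAnti f) (hg : StrictAnti g)
    (L : ℤ) : tailCount (range f) L = tailCount (range g) L ↔ ∀ k, (L ≤ f k ↔ L ≤ g k) := by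
  simp only [hf.le_iff_lt_tailCount, hg.le_iff_lt_tailCount]
  constructor
  · intro h k
    rw [h]
  · intro h
    have h1 := h (tailCount (range f) L)
    have h2 := h (tailCount (range g) L)
    omega

end TailCount

section Blocks

variable {r : ℕ} (nn : Fin r → ℕ)

def blockStart (i : ℤ) (j : Fin r) : ℤ := i * nTot nn + sigBefore nn j

lemma ncard_Xset (B : Set ℤ) (i : ℤ) (j : Fin r) :
    (Xset nn B i j).ncard = (B ∩ Ico (blockStart nn i j) (blockStart nn i j + nn j)).ncard := by
  have himage : Xset nn B i j =
      (· - blockStart nn i j) '' (B ∩ Ico (blockStart nn i j) (blockStart nn i j + nn j)) := by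
    ext y
    simp only [Xset, blockStart, mem_ofPred_eq, mem_image, mem_inter_iff, mem_Ico]
    constructor
    · rintro ⟨x, hx, h1, h2, rfl⟩
      exact ⟨x, ⟨hx, by omega, by omega⟩, by omega⟩
    · rintro ⟨x, ⟨hx, h1, h2⟩, rfl⟩
      exact ⟨x, hx, by omega, by omega, by omega⟩
  rw [himage, ncard_image_of_injective _ sub_left_injective]

lemma exists_blockStart_eq_add (i : ℤ) (j : Fin r) :
    ∃ i' j', blockStart nn i' j' = blockStart nn i j + nn j := by
  have hsucc :
      sigBefore nn j + nn j = ∑ k ∈ Finset.univ.filter (fun k : Fin r => k ≤ j), nn k := by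
    rw [sigBefore, add_comm, ← Finset.sum_insert (by simp)]
    congr 1
    ext k
    simp only [Finset.mem_insert, Finset.mem_filter, Finset.mem_univ, true_and, Fin.ext_iff,
      Fin.le_def]
    omega
  by_cases hj : (j : ℕ) + 1 < r
  · refine ⟨i, ⟨j + 1, hj⟩, ?_⟩
    have : sigBefore nn ⟨j + 1, hj⟩ = sigBefore nn j + nn j := by
      rw [hsucc, sigBefore]
      congr 1
      ext k
      simp only [Finset.mem_filter, Finset.mem_univ, true_and, Fin.le_def]
      omega
    simp only [blockStart, this]
    push_cast
    ring
  · refine ⟨i + 1, ⟨0, by omega⟩, ?_⟩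
    have : sigBefore nn j + nn j = nTot nn := by
      rw [hsucc, nTot, Finset.filter_true_of_mem fun k _ => Fin.le_def.2 (by omega)]
    have hzero : sigBefore nn ⟨0, by omega⟩ = 0 :=
      Finset.sum_eq_zero fun k hk => by simp at hk
    simp only [blockStart, hzero, ← this]
    push_cast
    ring

lemma tfun_eq_iff_tailCount_eq (hpos : ∀ j, 0 < nn j) {B B' : Set ℤ} (hB : BddAbove B)
    (hB' : BddAbove B') :
    tfun nn B = tfun nn B' ↔
      ∀ i j, tailCount B (blockStart nn i j) = tailCount B' (blockStart nn i j) := by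
  constructor
  · intro h i j
    refine tailCount_eq_of_ncard_Ico_eq hB hB' (E := range (Function.uncurry (blockStart nn)))
      ?_ _ ⟨(i, j), rfl⟩
    rintro _ ⟨⟨i, j⟩, rfl⟩
    obtain ⟨i', j', hnext⟩ := exists_blockStart_eq_add nn i j
    refine ⟨_, ⟨(i', j'), hnext⟩, by simpa using hpos j, ?_⟩
    simpa [tfun, ncard_Xset] using congrFun h (i, j)
  · intro h
    funext ⟨i, j⟩
    obtain ⟨i', j', hnext⟩ := exists_blockStart_eq_add nn i j
    simp only [tfun, ncard_Xset]
    exact ncard_Ico_eq_of_tailCount_eq hB hB' (by simp) (h i j) (hnext ▸ h i' j')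

end Blocks

lemma res_eq_intCast_iff (n : ℕ) (c : ℤ) (p : ℕ × ℕ) :
    res n p = (c : ZMod n) ↔ ∃ i : ℤ, (p.2 : ℤ) - p.1 = i * n + c := by
  rw [res, ← Int.cast_sub, eq_comm, ZMod.intCast_eq_intCast_iff_dvd_sub]
  exact ⟨fun ⟨i, hi⟩ => ⟨i, by linarith⟩, fun ⟨i, hi⟩ => ⟨i, by linarith⟩⟩

namespace SeqPartition

variable (lam mu : SeqPartition) (s : ℤ)

def beta (k : ℕ) : ℤ := lam.parts k + s - (k + 1)

lemma beta_strictAnti : StrictAnti (lam.beta s) :=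
  strictAnti_nat_of_succ_lt fun k => by
    have := lam.antitone' k (k + 1) k.le_succ
    simp only [beta]
    push_cast
    omega

lemma betaSet_eq_range : betaSet lam s = range (lam.beta s) := by
  ext x
  exact exists_congr fun k => eq_comm

lemma bddAbove_betaSet : BddAbove (betaSet lam s) := by
  rw [betaSet_eq_range]
  exact ⟨lam.beta s 0, by rintro _ ⟨k, rfl⟩; exact (lam.beta_strictAnti s).antitone k.zero_le⟩

lemma mem_diagram_iff {a c : ℕ} (ha : 1 ≤ a) :
    (a, c) ∈ diagram lam ↔ 1 ≤ c ∧ (c : ℤ) - a + s ≤ lam.beta s (a - 1) := by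
  simp only [diagram, beta, mem_ofPred_eq]
  omega

lemma nodes_of_residue_eq_iff (n : ℕ) (c : ℤ) :
    {p ∈ diagram lam | res n p = (c : ZMod n)} = {p ∈ diagram mu | res n p = (c : ZMod n)} ↔
      ∀ (i : ℤ) (k : ℕ), (i * n + (c + s) ≤ lam.beta s k ↔ i * n + (c + s) ≤ mu.beta s k) := by
  constructor
  · intro h i k
    by_cases hL : i * n + (c + s) ≤ s - (k + 1)
    · -- the node would sit in column `≤ 0`; both inequalities hold as the parts are `≥ 0`
      simp only [beta]
      omega
    · obtain ⟨col, hcol⟩ : ∃ col : ℕ, (col : ℤ) = i * n + c + k + 1 :=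
        ⟨(i * n + c + k + 1).toNat, by omega⟩
      have hres : res n (k + 1, col) = (c : ZMod n) :=
        (res_eq_intCast_iff n c _).2 ⟨i, by push_cast; omega⟩
      have hnode := Set.ext_iff.1 h (k + 1, col)
      simp only [mem_sep_iff, hres, and_true, mem_diagram_iff lam s k.succ_pos,
        mem_diagram_iff mu s k.succ_pos] at hnode
      push_cast at hnode
      constructor <;> intro hle
      · exact (hnode.1 ⟨by omega, by omega⟩).2.trans' (by omega)
      · exact (hnode.2 ⟨by omega, by omega⟩).2.trans' (by omega)
  · intro h
    have hrow : ∀ {a col : ℕ} {i : ℤ}, (col : ℤ) - a = i * n + c →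
        ((a, col) ∈ diagram lam ↔ (a, col) ∈ diagram mu) := by
      intro a col i hi
      rcases Nat.eq_zero_or_pos a with rfl | ha
      · simp [diagram]
      rw [mem_diagram_iff lam s ha, mem_diagram_iff mu s ha,
        show (col : ℤ) - a + s = i * n + (c + s) by omega, h]
    ext ⟨a, col⟩
    simp only [mem_sep_iff, res_eq_intCast_iff]
    exact and_congr_left fun ⟨_, hi⟩ => hrow hi

end SeqPartition

theorem statement15_general (n r : ℕ) (nn : Fin r → ℕ) (hpos : ∀ j : Fin r, 0 < nn j)
    (hsum : nTot nn = n) (lam mu : SeqPartition) (s : ℤ) :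
    tfun nn (betaSet lam s) = tfun nn (betaSet mu s) ↔
    ∀ j : Fin r,
      {p ∈ diagram lam | res n p = (((sigBefore nn j : ℤ) - s : ℤ) : ZMod n)} =
      {p ∈ diagram mu | res n p = (((sigBefore nn j : ℤ) - s : ℤ) : ZMod n)} := by
  subst hsum
  rw [tfun_eq_iff_tailCount_eq nn hpos (lam.bddAbove_betaSet s) (mu.bddAbove_betaSet s)]
  simp only [SeqPartition.betaSet_eq_range,
    (lam.beta_strictAnti s).tailCount_range_eq_iff (mu.beta_strictAnti s), blockStart]
  refine forall_comm.trans (forall_congr' fun j => ?_)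
  simp_rw [lam.nodes_of_residue_eq_iff mu s, sub_add_cancel]

/-- `𝚝^𝐧_{β_s(λ)} = 𝚝^𝐧_{β_s(μ)}` iff `λ` and `μ` have the same sets of
nodes of `n`-residue `σ_j − s` for all `j = 0, …, r−1`. -/
theorem statement15 (n r : ℕ) (hr : 0 < r) (nn : Fin r → ℕ) (hpos : ∀ j : Fin r, 0 < nn j)
    (hsum : nTot nn = n) (lam mu : SeqPartition) (s : ℤ) :
    tfun nn (betaSet lam s) = tfun nn (betaSet mu s) ↔
    ∀ j : Fin r,
      {p ∈ diagram lam | res n p = (((sigBefore nn j : ℤ) - s : ℤ) : ZMod n)} =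
      {p ∈ diagram mu | res n p = (((sigBefore nn j : ℤ) - s : ℤ) : ZMod n)} :=
  statement15_general n r nn hpos hsum lam mu s
end

section
/- Let p be a prime, let λ, μ ∈ 𝒫, and let I be the set of p-residues of the nodes in ([λ] \ [μ]) ∪ ([μ] \ [λ]). Suppose no two elements of I are adjacent (two residue classes a, b modulo p are adjacent iff a − b ≡ ±1 (mod p)). Then there exist s ∈ {0, 1} and a tuple 𝐧 = (n_1, …, n_r) of positive integers with n_j ∈ {1,2} for all j and n_1 + ⋯ + n_r = p, such that 𝚝^𝐧_{β_s(λ)} = 𝚝^𝐧_{β_s(μ)} and I = {residue class of (n_1 + ⋯ + n_i) − s − 1 modulo p : 1 ≤ i ≤ r, n_i = 2}. -/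
open scoped BigOperators

/-! The cut points `σ_j` are chosen to be the points of `[0, p]` whose residue (shifted by `s`) is
not in `I`; since `I` has no adjacent residues, and `s ∈ {0, 1}` can be chosen so that the points
`0` and `p` are cut points, consecutive cut points are `1` or `2` apart, and the gaps of length `2`
sit exactly around the residues of `I`. On the other hand, the number of β-numbers of `β_s(λ)`
that are `≥ x` can only differ from that of `β_s(μ)` if the diagonal of residue `x - s` meets
the symmetric difference of `[λ]` and `[μ]`. So both partitions put the same number of
β-numbers between any two consecutive cut points of the abacus. -/

section Composition

variable {q : ℕ → Prop}

lemma sigBefore_snoc_castSucc {r : ℕ} (nn : Fin r → ℕ) (x : ℕ) (j : Fin r) :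
    sigBefore (Fin.snoc nn x : Fin (r + 1) → ℕ) j.castSucc = sigBefore nn j := by
  simp [sigBefore, Finset.sum_filter, Fin.sum_univ_castSucc]

lemma sigBefore_snoc_last {r : ℕ} (nn : Fin r → ℕ) (x : ℕ) :
    sigBefore (Fin.snoc nn x : Fin (r + 1) → ℕ) (Fin.last r) = nTot nn := by
  simp [sigBefore, nTot, Finset.sum_filter, Fin.sum_univ_castSucc]

lemma nTot_snoc {r : ℕ} (nn : Fin r → ℕ) (x : ℕ) :
    nTot (Fin.snoc nn x : Fin (r + 1) → ℕ) = nTot nn + x := by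
  simp [nTot, Fin.sum_univ_castSucc]

structure IsOneTwoComposition (q : ℕ → Prop) (n : ℕ) {r : ℕ} (nn : Fin r → ℕ) : Prop where
  one_or_two : ∀ j, nn j = 1 ∨ nn j = 2
  nTot_eq : nTot nn = n
  not_q_left : ∀ j, ¬ q (sigBefore nn j)
  not_q_right : ∀ j, ¬ q (sigBefore nn j + nn j)
  q_of_eq_two : ∀ j, nn j = 2 → q (sigBefore nn j + 1)
  exists_eq_two_of_q : ∀ m < n, q m → ∃ j, nn j = 2 ∧ sigBefore nn j + 1 = m

lemma IsOneTwoComposition.snoc {n r x : ℕ} {nn : Fin r → ℕ} (h : IsOneTwoComposition q n nn)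
    (hx : x = 1 ∨ x = 2) (hend : ¬ q (n + x))
    (hmid : ∀ m, n ≤ m → m < n + x → (q m ↔ x = 2 ∧ m = n + 1)) :
    IsOneTwoComposition q (n + x) (Fin.snoc nn x : Fin (r + 1) → ℕ) := by
  have hn : ¬ q n := fun hq => by have := (hmid n le_rfl (by omega)).1 hq; omega
  refine ⟨fun j => ?_, by rw [nTot_snoc, h.nTot_eq], fun j => ?_, fun j => ?_, fun j => ?_, ?_⟩
  all_goals try induction j using Fin.lastCases
  all_goals simp only [sigBefore_snoc_castSucc, sigBefore_snoc_last, Fin.snoc_castSucc,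
    Fin.snoc_last, h.nTot_eq, Fin.exists_fin_succ']
  · exact hx
  · exact h.one_or_two _
  · exact hn
  · exact h.not_q_left _
  · exact hend
  · exact h.not_q_right _
  · exact fun hx2 => (hmid (n + 1) (by omega) (by omega)).2 ⟨hx2, rfl⟩
  · exact h.q_of_eq_two _
  · intro m hm hqm
    by_cases hmn : m < n
    · exact Or.inl (h.exists_eq_two_of_q m hmn hqm)
    · obtain ⟨hx2, rfl⟩ := (hmid m (by omega) hm).1 hqm
      exact Or.inr ⟨hx2, rfl⟩

theorem IsOneTwoComposition.exists (hq : ∀ m, q m → ¬ q (m + 1)) (h0 : ¬ q 0) (n : ℕ)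
    (hn : ¬ q n) : ∃ r, ∃ nn : Fin r → ℕ, IsOneTwoComposition q n nn := by
  induction n using Nat.strong_induction_on with
  | _ n ih =>
  rcases n with _ | k
  · exact ⟨0, Fin.elim0, fun j => j.elim0, rfl, fun j => j.elim0, fun j => j.elim0,
      fun j => j.elim0, fun m hm => absurd hm m.not_lt_zero⟩
  by_cases hk : q k
  · obtain ⟨l, rfl⟩ : ∃ l, k = l + 1 :=
      Nat.exists_eq_succ_of_ne_zero (by rintro rfl; exact h0 hk)
    have hl : ¬ q l := fun hql => hq l hql hk
    obtain ⟨r, nn, h⟩ := ih l (by omega) hl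
    refine ⟨r + 1, _, h.snoc (Or.inr rfl) hn fun m hlm hm => ?_⟩
    rcases (show m = l ∨ m = l + 1 by omega) with rfl | rfl
    · simpa using hl
    · simpa using hk
  · obtain ⟨r, nn, h⟩ := ih k (by omega) hk
    refine ⟨r + 1, _, h.snoc (Or.inl rfl) hn fun m hkm hm => ?_⟩
    obtain rfl : m = k := by omega
    simpa using hk

end Composition

def diffResidues (n : ℕ) (lam mu : SeqPartition) : Set (ZMod n) :=
  res n '' ((diagram lam \ diagram mu) ∪ (diagram mu \ diagram lam))

def beta (lam : SeqPartition) (s : ℤ) (i : ℕ) : ℤ := (lam.parts i : ℤ) + s - ((i : ℤ) + 1)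

def betaIndexGE (lam : SeqPartition) (s x : ℤ) : Set ℕ := {i | x ≤ beta lam s i}

lemma betaSet_eq_range (lam : SeqPartition) (s : ℤ) : betaSet lam s = Set.range (beta lam s) := by
  ext x
  simp only [betaSet, beta, Set.mem_ofPred_eq, Set.mem_range, eq_comm]

lemma beta_strictAnti (lam : SeqPartition) (s : ℤ) : StrictAnti (beta lam s) :=
  strictAnti_nat_of_succ_lt fun i => by
    have := lam.antitone' i (i + 1) i.le_succ
    simp only [beta]
    omega

lemma betaSet_inter_Ico (lam : SeqPartition) (s u v : ℤ) :
    betaSet lam s ∩ Set.Ico u v = beta lam s '' (betaIndexGE lam s u \ betaIndexGE lam s v) := by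
  ext x
  simp only [betaSet_eq_range, betaIndexGE, Set.mem_inter_iff, Set.mem_range, Set.mem_Ico,
    Set.mem_image, Set.mem_sdiff, Set.mem_ofPred_eq, not_le]
  constructor
  · rintro ⟨⟨i, rfl⟩, hu, hv⟩
    exact ⟨i, ⟨hu, hv⟩, rfl⟩
  · rintro ⟨i, ⟨hu, hv⟩, rfl⟩
    exact ⟨⟨i, rfl⟩, hu, hv⟩

lemma ncard_betaSet_inter_Ico (lam : SeqPartition) (s u v : ℤ) :
    (betaSet lam s ∩ Set.Ico u v).ncard = (betaIndexGE lam s u \ betaIndexGE lam s v).ncard := by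
  rw [betaSet_inter_Ico, Set.ncard_image_of_injective _ (beta_strictAnti lam s).injective]

lemma betaIndexGE_subset (n : ℕ) (lam mu : SeqPartition) (s x : ℤ)
    (hx : ((x - s : ℤ) : ZMod n) ∉ res n '' (diagram lam \ diagram mu)) :
    betaIndexGE lam s x ⊆ betaIndexGE mu s x := by
  intro i hi
  by_contra hmu
  simp only [betaIndexGE, beta, Set.mem_ofPred_eq, not_le] at hi hmu
  -- the node of row `i + 1` on the diagonal of content `x - s`
  refine hx ⟨(i + 1, (x - s + i + 1).toNat), ⟨?_, ?_⟩, ?_⟩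
  · simp only [diagram, Set.mem_ofPred_eq, Nat.add_sub_cancel]
    omega
  · simp only [diagram, Set.mem_ofPred_eq, Nat.add_sub_cancel, not_and, not_le]
    omega
  · simp only [res]
    rw [Int.toNat_of_nonneg (by omega)]
    push_cast
    ring

lemma betaIndexGE_eq (n : ℕ) (lam mu : SeqPartition) (s x : ℤ)
    (hx : ((x - s : ℤ) : ZMod n) ∉ diffResidues n lam mu) :
    betaIndexGE lam s x = betaIndexGE mu s x := by
  rw [diffResidues, Set.image_union] at hx
  exact (betaIndexGE_subset n lam mu s x fun h => hx (Or.inl h)).antisymm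
    (betaIndexGE_subset n mu lam s x fun h => hx (Or.inr h))

lemma Xset_eq_image {r : ℕ} (nn : Fin r → ℕ) (B : Set ℤ) (i : ℤ) (j : Fin r) :
    Xset nn B i j = (· - (i * nTot nn + sigBefore nn j)) ''
      (B ∩ Set.Ico (i * nTot nn + sigBefore nn j) (i * nTot nn + sigBefore nn j + nn j)) := by
  ext y
  simp only [Xset, Set.mem_ofPred_eq, Set.mem_image, Set.mem_inter_iff, Set.mem_Ico]
  constructor
  · rintro ⟨x, hx, hl, hr, rfl⟩
    exact ⟨x, ⟨hx, by omega, by omega⟩, by ring⟩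
  · rintro ⟨x, ⟨hx, hl, hr⟩, rfl⟩
    exact ⟨x, hx, by omega, by omega, by ring⟩

lemma tfun_apply {r : ℕ} (nn : Fin r → ℕ) (B : Set ℤ) (i : ℤ) (j : Fin r) :
    tfun nn B (i, j) = (B ∩ Set.Ico (i * nTot nn + sigBefore nn j)
      (i * nTot nn + sigBefore nn j + nn j)).ncard := by
  rw [tfun, Xset_eq_image, Set.ncard_image_of_injective _ (sub_left_injective)]

lemma tfun_betaSet_eq (n : ℕ) (lam mu : SeqPartition) (s : ℤ) {r : ℕ} (nn : Fin r → ℕ)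
    (hcut : ∀ (i : ℤ) (j : Fin r),
      ((i * nTot nn + sigBefore nn j - s : ℤ) : ZMod n) ∉ diffResidues n lam mu ∧
        ((i * nTot nn + sigBefore nn j + nn j - s : ℤ) : ZMod n) ∉ diffResidues n lam mu) :
    tfun nn (betaSet lam s) = tfun nn (betaSet mu s) := by
  funext ⟨i, j⟩
  rw [tfun_apply, tfun_apply, ncard_betaSet_inter_Ico, ncard_betaSet_inter_Ico,
    betaIndexGE_eq n lam mu s _ (hcut i j).1, betaIndexGE_eq n lam mu s _ (hcut i j).2]

lemma IsOneTwoComposition.eq_setOf_two {p : ℕ} [NeZero p] {I : Set (ZMod p)} {s : ℤ} {r : ℕ}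
    {nn : Fin r → ℕ} (h : IsOneTwoComposition (fun m => ((m - s : ℤ) : ZMod p) ∈ I) p nn) :
    I = {c | ∃ j, nn j = 2 ∧ c = ((sigBefore nn j + nn j - s - 1 : ℤ) : ZMod p)} := by
  ext c
  constructor
  · intro hc
    have hval : (((c + s).val : ℤ) - s : ZMod p) = c := by simp
    obtain ⟨j, hj2, hjc⟩ := h.exists_eq_two_of_q (c + s).val (ZMod.val_lt _) (by simpa [hval] using hc)
    refine ⟨j, hj2, ?_⟩
    rw [← hval, ← hjc, hj2]
    push_cast
    ring
  · rintro ⟨j, hj2, rfl⟩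
    have := h.q_of_eq_two j hj2
    rw [hj2]
    convert this using 2
    push_cast
    ring

/-- If the set `I` of `p`-residues of the nodes of the symmetric difference
of `[λ]` and ` [μ]` has no two adjacent elements, then there are `s ∈ {0,1}` and a tuple
`𝐧 = (n_1, …, n_r)` with `n_j ∈ {1,2}` and `Σ n_j = p` such that
`𝚝^𝐧_{β_s(λ)} = 𝚝^𝐧_{β_s(μ)}` and `I = {σ_i − s − 1 mod p : n_i = 2}`. -/
theorem statement19 (p : ℕ) (hp : Nat.Prime p) (lam mu : SeqPartition)
    (I : Set (ZMod p))
    (hI : I = res p '' ((diagram lam \ diagram mu) ∪ (diagram mu \ diagram lam)))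
    (hadj : ∀ a ∈ I, ∀ b ∈ I, a - b ≠ 1 ∧ a - b ≠ -1) :
    ∃ s : ℤ, (s = 0 ∨ s = 1) ∧ ∃ r : ℕ, ∃ nn : Fin r → ℕ,
      (∀ j : Fin r, nn j = 1 ∨ nn j = 2) ∧ nTot nn = p ∧
      tfun nn (betaSet lam s) = tfun nn (betaSet mu s) ∧
      I = {c : ZMod p | ∃ j : Fin r, nn j = 2 ∧
        c = ((((sigBefore nn j : ℤ) + (nn j : ℤ) - s - 1 : ℤ)) : ZMod p)} := by
  have : NeZero p := ⟨hp.ne_zero⟩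
  obtain ⟨s, hs01, hs⟩ : ∃ s : ℤ, (s = 0 ∨ s = 1) ∧ ((-s : ℤ) : ZMod p) ∉ I := by
    by_cases h0 : ((0 : ℤ) : ZMod p) ∈ I
    · exact ⟨1, Or.inr rfl, fun h1 => (hadj _ h0 _ h1).1 (by simp)⟩
    · exact ⟨0, Or.inl rfl, by simpa using h0⟩
  set q : ℕ → Prop := fun m => ((m - s : ℤ) : ZMod p) ∈ I
  have hperiodic : ∀ (i : ℤ) (m : ℕ), ((i * p + m - s : ℤ) : ZMod p) = ((m - s : ℤ) : ZMod p) := by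
    intro i m
    simp
  obtain ⟨r, nn, hnn⟩ := IsOneTwoComposition.exists (q := q)
    (fun m hm hm1 => (hadj _ hm1 _ hm).1 (by push_cast; ring)) (by simpa [q] using hs) p
    (by simpa [q] using hs)
  refine ⟨s, hs01, r, nn, hnn.one_or_two, hnn.nTot_eq, ?_, hnn.eq_setOf_two⟩
  refine tfun_betaSet_eq p lam mu s nn fun i j => ?_
  rw [diffResidues, ← hI, hnn.nTot_eq, add_assoc, ← Nat.cast_add, hperiodic, hperiodic]
  exact ⟨hnn.not_q_left j, hnn.not_q_right j⟩
end
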